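/- The greedy LZ factorization of a string is optimal in the number of factors: among all unidirectional parsings of T into factors, each of which either has length 1 or occurs starting at an earlier position, the greedy parsing (always taking the longest possible factor) produces the minimum number of factors. -/

import Mathlib

/-!
Greedy stays ahead: by induction on `i`, the first `i` greedy factors cover at least as long a
prefix of `T` as the first `i` factors of any other parsing. In the inductive step, if the
other parsing's `i`-th factor ends beyond the current greedy position, its suffix from there is
again admissible (a suffix of an earlier occurrence is an earlier occurrence), so the longest
admissible factor reaches at least as far. Since every greedy factor is nonempty, a greedy
parsing with more factors would still be short of the end of `T` after `|P|` factors.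
-/

/-- A factor of length `ℓ` starting at (0-based) position `p` of `T` is
admissible if it is nonempty, fits into `T`, and either has length 1 or
occurs starting at some earlier position `j < p`. -/
def LZAdmissible {α : Type*} (T : List α) (p ℓ : ℕ) : Prop :=
  0 < ℓ ∧ p + ℓ ≤ T.length ∧
    (ℓ = 1 ∨ ∃ j < p, ∀ t < ℓ, T[j + t]? = T[p + t]?)

/-- A unidirectional parsing of `T`, given by the list `L` of factor lengths:
the lengths sum to `|T|` and each factor is admissible at its starting
position (the sum of the preceding lengths). -/
def LZParsing {α : Type*} (T : List α) (L : List ℕ) : Prop :=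
  L.sum = T.length ∧
  ∀ i < L.length, LZAdmissible T ((L.take i).sum) (L.getD i 0)

/-- A greedy parsing: a parsing in which every factor is a longest
admissible factor at its starting position. -/
def LZGreedy {α : Type*} (T : List α) (G : List ℕ) : Prop :=
  LZParsing T G ∧
  ∀ i < G.length, ∀ ℓ, LZAdmissible T ((G.take i).sum) ℓ → ℓ ≤ G.getD i 0

theorem List.sum_take_succ_getD {L : List ℕ} {n : ℕ} (h : n < L.length) :
    (L.take (n + 1)).sum = (L.take n).sum + L.getD n 0 := by
  rw [List.sum_take_succ L n h, List.getD_eq_getElem L 0 h]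

section

variable {α : Type*} {T : List α}

theorem LZAdmissible.suffix {p ℓ q : ℕ} (h : LZAdmissible T p ℓ) (hpq : p ≤ q)
    (hq : q < p + ℓ) : LZAdmissible T q (p + ℓ - q) := by
  obtain ⟨-, hfit, hlen_one | ⟨j, hjp, hocc⟩⟩ := h
  · exact ⟨by omega, by omega, Or.inl (by omega)⟩
  refine ⟨by omega, by omega, Or.inr ⟨j + (q - p), by omega, fun t ht => ?_⟩⟩
  have hshift := hocc (q - p + t) (by omega)
  rwa [← Nat.add_assoc, show p + (q - p + t) = q + t by omega] at hshift

theorem LZAdmissible.add_le_add_of_isLongest {p ℓ q m : ℕ} (h : LZAdmissible T p ℓ)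
    (hpq : p ≤ q) (hlongest : ∀ k, LZAdmissible T q k → k ≤ m) : p + ℓ ≤ q + m := by
  by_cases hq : q < p + ℓ
  · have := hlongest _ (h.suffix hpq hq)
    omega
  · omega

theorem LZParsing.sum_take_lt_length {L : List ℕ} (hL : LZParsing T L) {i : ℕ}
    (hi : i < L.length) : (L.take i).sum < T.length := by
  obtain ⟨hpos, hfit, -⟩ := hL.2 i hi
  omega

theorem LZGreedy.sum_take_le {G P : List ℕ} (hG : LZGreedy T G) (hP : LZParsing T P) :
    ∀ i ≤ P.length, i ≤ G.length → (P.take i).sum ≤ (G.take i).sum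
  | 0, _, _ => by simp
  | n + 1, hnP, hnG => by
    rw [List.sum_take_succ_getD hnP, List.sum_take_succ_getD hnG]
    exact (hP.2 n hnP).add_le_add_of_isLongest (hG.sum_take_le hP n (by omega) (by omega))
      (hG.2 n hnG)

end

/-- The greedy LZ parsing is optimal in the number of factors:
it has at most as many factors as any unidirectional parsing. -/
theorem greedy_lz_optimal_factor_count
    {α : Type*} (T : List α) (G P : List ℕ)
    (hG : LZGreedy T G) (hP : LZParsing T P) :
    G.length ≤ P.length := by
  by_contra! hlonger
  have hahead := hG.sum_take_le hP P.length le_rfl hlonger.le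
  have hshort := hG.1.sum_take_lt_length hlonger
  rw [List.take_length, hP.1] at hahead
  omega
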